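/- Let t^M = (t^M_0,…,t^M_{M−1}) denote the equalized solution with uniform weights and M levels. Then there exists a constant C > 0 such that for all M ≥ 3, t^M_1 ≥ C·M^{−3}. -/

import Mathlib

/-- The pairwise large-deviations rate
`r_{g,h}(p,q) = -(g+h)·log[(1-p)^{g/(g+h)}·(1-q)^{h/(g+h)} + p^{g/(g+h)}·q^{h/(g+h)}]`. -/
noncomputable def pairRate (g h p q : ℝ) : ℝ :=
  -(g + h) *
    Real.log ((1 - p) ^ (g / (g + h)) * (1 - q) ^ (h / (g + h))
      + p ^ (g / (g + h)) * q ^ (h / (g + h)))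

/-- The `i`-th rate (for `1 ≤ i ≤ M-1`) of a level vector `t` with weights `g`:
`r₁ = -g₁·log(1-t₁)`, `rᵢ = r_{g_{i-1},g_i}(t_{i-1},t_i)` for `2 ≤ i ≤ M-2`, and
`r_{M-1} = -g_{M-2}·log(t_{M-2})`. -/
noncomputable def rateAt (M : ℕ) (g t : ℕ → ℝ) (i : ℕ) : ℝ :=
  if i = 1 then -(g 1) * Real.log (1 - t 1)
  else if i = M - 1 then -(g (M - 2)) * Real.log (t (M - 2))
  else pairRate (g (i - 1)) (g i) (t (i - 1)) (t i)

/-- `t` is an equalized solution with `M` levels for the weights `g`, with common rate `r`: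
`t₀ = 0 < t₁ < ⋯ < t_{M-2} < 1 = t_{M-1}` and all of the `M-1` rates equal `r`. -/
def IsEqualizedWithRate (M : ℕ) (g t : ℕ → ℝ) (r : ℝ) : Prop :=
  t 0 = 0 ∧ t (M - 1) = 1 ∧ (∀ i, i < M - 1 → t i < t (i + 1)) ∧
    ∀ i, 1 ≤ i → i ≤ M - 1 → rateAt M g t i = r

/-- `t` is an equalized solution with `M` levels for the weights `g`. -/
def IsEqualizedSol (M : ℕ) (g t : ℕ → ℝ) : Prop :=
  ∃ r, IsEqualizedWithRate M g t r

/-!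
Some step `t_{i+1} - t_i` is at least `1/(M-1)`. With uniform weights the two boundary rates are
pair rates against the end levels `t₀ = 0` and `t_{M-1} = 1`, and every pair rate dominates a
quarter of the squared step, so the common rate satisfies `r ≥ 1/(4M²)`. Since
`r = -log(1 - t₁) ≤ t₁/(1 - t₁)`, this gives `t₁ ≥ r/(1 + r)`.
-/

open Real Finset

lemma exists_large_step (t : ℕ → ℝ) {N : ℕ} (hN : 0 < N) :
    ∃ i < N, t N - t 0 ≤ N * (t (i + 1) - t i) := by
  have hsum : ∑ _i ∈ range N, (t N - t 0) ≤ ∑ i ∈ range N, (N : ℝ) * (t (i + 1) - t i) := by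
    rw [← mul_sum, sum_range_sub, sum_const, card_range, nsmul_eq_mul]
  simpa using exists_le_of_sum_le (nonempty_range_iff.mpr hN.ne') hsum

lemma pairRate_one_one (p q : ℝ) :
    pairRate 1 1 p q = -2 * log (√(1 - p) * √(1 - q) + √p * √q) := by
  simp only [pairRate, sqrt_eq_rpow]
  norm_num

lemma pairRate_one_one_zero_left {q : ℝ} (hq : q ≤ 1) : pairRate 1 1 0 q = -log (1 - q) := by
  rw [pairRate_one_one, sqrt_zero, zero_mul, add_zero, sub_zero, sqrt_one, one_mul,
    log_sqrt (by linarith)]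
  ring

lemma pairRate_one_one_one_right {p : ℝ} (hp : 0 ≤ p) : pairRate 1 1 p 1 = -log p := by
  rw [pairRate_one_one, sub_self, sqrt_zero, mul_zero, zero_add, sqrt_one, mul_one, log_sqrt hp]
  ring

/-- With `s` the Bhattacharyya coefficient inside the logarithm,
`-2 log s ≥ 2 (1 - s) = (√q - √p)² + (√(1-q) - √(1-p))² ≥ (q - p)² / 4`. -/
lemma sq_sub_div_four_le_pairRate_one_one {p q : ℝ} (hp₀ : 0 ≤ p) (hp₁ : p ≤ 1) (hq₀ : 0 ≤ q)
    (hq₁ : q ≤ 1) (hpos : 0 < √(1 - p) * √(1 - q) + √p * √q) :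
    (q - p) ^ 2 / 4 ≤ pairRate 1 1 p q := by
  rw [pairRate_one_one]
  set a := √p
  set b := √q
  set c := √(1 - p)
  set d := √(1 - q)
  have ha : a ^ 2 = p := sq_sqrt hp₀
  have hb : b ^ 2 = q := sq_sqrt hq₀
  have hc : c ^ 2 = 1 - p := sq_sqrt (by linarith)
  have hd : d ^ 2 = 1 - q := sq_sqrt (by linarith)
  have hab : (a + b) ^ 2 ≤ 4 := by nlinarith [sq_nonneg (a - b)]
  have hsqrt : (q - p) ^ 2 ≤ 4 * (b - a) ^ 2 := by
    have : (q - p) ^ 2 = (b - a) ^ 2 * (a + b) ^ 2 := by rw [← ha, ← hb]; ring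
    nlinarith [sq_nonneg (b - a)]
  have hbhat : (b - a) ^ 2 ≤ 2 - 2 * (c * d + a * b) := by nlinarith [sq_nonneg (c - d)]
  nlinarith [log_le_sub_one_of_pos hpos]

lemma rateAt_one_eq_pairRate {M i : ℕ} {t : ℕ → ℝ} (h0 : t 0 = 0) (hlast : t (M - 1) = 1)
    (hunit : ∀ j ≤ M - 1, t j ∈ Set.Icc 0 1) (hi : 1 ≤ i) (hiM : i ≤ M - 1) :
    rateAt M (fun _ => 1) t i = pairRate 1 1 (t (i - 1)) (t i) := by
  unfold rateAt
  split_ifs with h1 hM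
  · subst h1
    rw [Nat.sub_self, h0, pairRate_one_one_zero_left (hunit 1 hiM).2, neg_one_mul]
  · subst hM
    rw [hlast, pairRate_one_one_one_right (hunit _ (by omega)).1, neg_one_mul,
      show M - 1 - 1 = M - 2 by omega]
  · rfl

namespace IsEqualizedWithRate

variable {M : ℕ} {g t : ℕ → ℝ} {r : ℝ}

lemma strictMonoOn (h : IsEqualizedWithRate M g t r) : StrictMonoOn t (Set.Iic (M - 1)) :=
  strictMonoOn_Iic_of_lt_succ h.2.2.1

lemma mem_Icc (h : IsEqualizedWithRate M g t r) {i : ℕ} (hi : i ≤ M - 1) :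
    t i ∈ Set.Icc 0 1 :=
  ⟨h.1 ▸ h.strictMonoOn.monotoneOn (Nat.zero_le _) hi (Nat.zero_le i),
    h.2.1 ▸ h.strictMonoOn.monotoneOn hi Set.self_mem_Iic hi⟩

lemma pos (h : IsEqualizedWithRate M g t r) {i : ℕ} (hi₀ : 0 < i) (hi : i ≤ M - 1) : 0 < t i :=
  h.1 ▸ h.strictMonoOn (Nat.zero_le _) hi hi₀

lemma lt_one (h : IsEqualizedWithRate M g t r) {i : ℕ} (hi : i < M - 1) : t i < 1 :=
  h.2.1 ▸ h.strictMonoOn hi.le Set.self_mem_Iic hi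

lemma sq_step_div_four_le (h : IsEqualizedWithRate M (fun _ => 1) t r) (hM : 3 ≤ M) {i : ℕ}
    (hi : i < M - 1) : (t (i + 1) - t i) ^ 2 / 4 ≤ r := by
  have hunit : ∀ j ≤ M - 1, t j ∈ Set.Icc 0 1 := fun j hj => h.mem_Icc hj
  have hpos : 0 < √(1 - t i) * √(1 - t (i + 1)) + √(t i) * √(t (i + 1)) := by
    rcases Nat.eq_zero_or_pos i with rfl | hi₀
    · rw [h.1, sub_zero, sqrt_one, one_mul, sqrt_zero, zero_mul, add_zero]
      exact sqrt_pos.mpr (sub_pos.mpr (h.lt_one (by omega)))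
    · exact add_pos_of_nonneg_of_pos (by positivity)
        (mul_pos (sqrt_pos.mpr (h.pos hi₀ hi.le)) (sqrt_pos.mpr (h.pos (by omega) hi)))
  rw [← h.2.2.2 (i + 1) (by omega) (by omega),
    rateAt_one_eq_pairRate h.1 h.2.1 hunit (by omega) (by omega), Nat.add_sub_cancel]
  exact sq_sub_div_four_le_pairRate_one_one (hunit i hi.le).1 (hunit i hi.le).2
    (hunit (i + 1) hi).1 (hunit (i + 1) hi).2 hpos

end IsEqualizedWithRate

lemma div_one_add_le_of_le_neg_log_one_sub {a x : ℝ} (ha : 0 ≤ a) (hx : x < 1)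
    (h : a ≤ -log (1 - x)) : a / (1 + a) ≤ x := by
  have hx' : 0 < 1 - x := by linarith
  have hlog : -log (1 - x) ≤ (1 - x)⁻¹ - 1 := by
    rw [← log_inv]
    exact log_le_sub_one_of_pos (inv_pos.mpr hx')
  have : a * (1 - x) ≤ x := by
    have := mul_le_mul_of_nonneg_right (h.trans hlog) hx'.le
    rwa [sub_mul, inv_mul_cancel₀ hx'.ne', one_mul, sub_sub_cancel] at this
  rw [div_le_iff₀ (by linarith)]
  linarith

/-- **Polynomial lower bound on the first level (uniform weights).**
There is a constant `C > 0` such that for all `M ≥ 3`, the equalized solution with uniform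
weights and `M` levels satisfies `t^M_1 ≥ C·M⁻³`. -/
theorem equalized_first_level_lower_bound :
    ∃ C : ℝ, 0 < C ∧ ∀ M : ℕ, 3 ≤ M →
      ∀ t : ℕ → ℝ, IsEqualizedSol M (fun _ => (1 : ℝ)) t →
        C / (M : ℝ) ^ 3 ≤ t 1 := by
  refine ⟨1 / 5, by norm_num, fun M hM t ⟨r, h⟩ => ?_⟩
  have hM' : (3 : ℝ) ≤ M := by exact_mod_cast hM
  obtain ⟨i, hi, hstep⟩ := exists_large_step t (N := M - 1) (by omega)
  have hr : 1 / (4 * (M : ℝ) ^ 2) ≤ r := by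
    have hsq := h.sq_step_div_four_le hM hi
    rw [h.1, h.2.1, Nat.cast_sub (by omega), Nat.cast_one] at hstep
    have hpos : 0 ≤ t (i + 1) - t i := sub_nonneg.mpr (h.2.2.1 i hi).le
    rw [div_le_iff₀ (by positivity)]
    nlinarith
  have hr₁ : -log (1 - t 1) = r := by
    simpa [rateAt] using h.2.2.2 1 le_rfl (by omega)
  calc 1 / 5 / (M : ℝ) ^ 3 ≤ 1 / (4 * (M : ℝ) ^ 2) / (1 + 1 / (4 * (M : ℝ) ^ 2)) := by
        field_simp
        nlinarith
    _ ≤ t 1 := div_one_add_le_of_le_neg_log_one_sub (by positivity)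
        (h.lt_one (by omega)) (hr₁ ▸ hr)
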